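/- arXiv:1707.01392 — 2 statements merged into one kernel-verified Lean document; each statement's English description precedes it below -/
import Mathlib

section
/- (Solution 6) In the simplified three-player full-street Kuhn poker game with pot size (3+√23)/2 ≤ P ≤ 4, the strategy profile with a₁ = (4−P)(P+1), b₁ = 2(4−P), a₂ = 1, b₂ = 2/(P+1), b₃ = 2(P−3)/(P+1), c₁ = 1, d₂ = (5+7P−2P²)/(P+1), c₃ = 0, d₁ = (4+8P−2P²)/(P+1), c₂ = 0 and d₃ = (2P−4)/(P+1) is an equilibrium. -/
/-- A strategy profile for simplified three-player full-street Kuhn poker: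
eleven betting/calling frequencies. -/
structure Profile where
  a1 : ℝ
  b1 : ℝ
  c1 : ℝ
  d1 : ℝ
  a2 : ℝ
  b2 : ℝ
  c2 : ℝ
  d2 : ℝ
  b3 : ℝ
  c3 : ℝ
  d3 : ℝ

/-- All eleven frequencies lie in [0,1]. -/
def Profile.valid (s : Profile) : Prop :=
  s.a1 ∈ Set.Icc (0:ℝ) 1 ∧ s.b1 ∈ Set.Icc (0:ℝ) 1 ∧ s.c1 ∈ Set.Icc (0:ℝ) 1 ∧
  s.d1 ∈ Set.Icc (0:ℝ) 1 ∧ s.a2 ∈ Set.Icc (0:ℝ) 1 ∧ s.b2 ∈ Set.Icc (0:ℝ) 1 ∧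
  s.c2 ∈ Set.Icc (0:ℝ) 1 ∧ s.d2 ∈ Set.Icc (0:ℝ) 1 ∧ s.b3 ∈ Set.Icc (0:ℝ) 1 ∧
  s.c3 ∈ Set.Icc (0:ℝ) 1 ∧ s.d3 ∈ Set.Icc (0:ℝ) 1

/-- Player 1's expected profit (so that 24 E₁ equals the stated polynomial). -/
noncomputable def E1 (P : ℝ) (s : Profile) : ℝ :=
  (1 / 24) *
    ((-2 * s.b2 + 2 * s.c2 - 2 * s.b3 + 2 * s.d3 - s.b2 * s.c3) * s.a1
      + (2 * P - 4 - (P + 1) * (s.c2 + s.d3)) * s.b1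
      + (s.b2 - 2 + (P + s.a2) * s.b3) * s.c1
      + ((P + 1) * s.b2 - 2 * s.a2) * s.d1
      + (2 - P) * s.b3 + (2 + s.c3 - P) * s.b2)

/-- Player 2's expected profit (so that 24 E₂ equals the stated polynomial). -/
noncomputable def E2 (P : ℝ) (s : Profile) : ℝ :=
  (1 / 24) *
    ((2 * s.d1 + 2 * s.c3 - 2 * s.b3 - s.c1 * s.b3 - s.b1 * s.c3) * s.a2
      + (2 * P - 4 + 2 * s.a1 - (P + 1) * (s.c3 + s.d1)) * s.b2
      + (P * s.b1 - 2 * s.a1) * s.c2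
      + ((P + 1) * s.b3 - 2 + s.b1) * s.d2
      + (2 - P + s.c1) * s.b3 + (2 - P) * s.b1)

/-- Player 3's expected profit (so that 24 E₃ equals the stated polynomial). -/
noncomputable def E3 (P : ℝ) (s : Profile) : ℝ :=
  (1 / 24) *
    ((2 * P - 4 + 2 * s.a1 + 2 * s.a2 - (P + 1) * (s.c1 + s.d2)) * s.b3
      + ((P + s.a1) * s.b2 - (2 - s.b1) * s.a2) * s.c3
      + ((P + 1) * s.b1 - 2 * s.a1) * s.d3
      + (2 - P - s.c1) * s.b2 + 2 * s.c1
      + (2 - P + s.c2 - s.d2) * s.b1 + 2 * s.d2)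

/-- A profile is an equilibrium if no player can increase her own expected
profit by unilaterally changing her own frequencies within [0,1]. -/
def IsEquilibrium (P : ℝ) (s : Profile) : Prop :=
  (∀ a b c d : ℝ, a ∈ Set.Icc (0:ℝ) 1 → b ∈ Set.Icc (0:ℝ) 1 →
      c ∈ Set.Icc (0:ℝ) 1 → d ∈ Set.Icc (0:ℝ) 1 →
      E1 P { s with a1 := a, b1 := b, c1 := c, d1 := d } ≤ E1 P s) ∧
  (∀ a b c d : ℝ, a ∈ Set.Icc (0:ℝ) 1 → b ∈ Set.Icc (0:ℝ) 1 →
      c ∈ Set.Icc (0:ℝ) 1 → d ∈ Set.Icc (0:ℝ) 1 →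
      E2 P { s with a2 := a, b2 := b, c2 := c, d2 := d } ≤ E2 P s) ∧
  (∀ b c d : ℝ, b ∈ Set.Icc (0:ℝ) 1 → c ∈ Set.Icc (0:ℝ) 1 →
      d ∈ Set.Icc (0:ℝ) 1 →
      E3 P { s with b3 := b, c3 := c, d3 := d } ≤ E3 P s)

/-!
Each player's expected profit is affine in her own frequencies, so she cannot gain by deviating
as soon as every own frequency maximizes its coefficient times a frequency on `[0, 1]`. At this
profile the coefficients of `a₁, b₁, d₁, b₂, d₂, b₃, d₃` vanish (the opponents make the player
indifferent), while those of `c₁` and `a₂` are nonnegative and those of `c₂` and `c₃` nonpositive.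
Up to the positive factor `P + 1`, the signs come down to `2P² - 6P - 7 ≥ 0`, which is exactly
`P ≥ (3 + √23) / 2`, and to `P ≤ 4`.
-/

open Set

section LinearMaximization

variable {g x : ℝ}

theorem isMaxOn_mul_of_eq_zero {t : Set ℝ} (hg : g = 0) : IsMaxOn (g * ·) t x :=
  isMaxOn_iff.mpr fun _ _ => by simp [hg]

theorem isMaxOn_mul_Icc_one (hg : 0 ≤ g) : IsMaxOn (g * ·) (Icc 0 1) 1 :=
  isMaxOn_iff.mpr fun _ hy => by simpa using mul_le_mul_of_nonneg_left hy.2 hg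

theorem isMaxOn_mul_Icc_zero (hg : g ≤ 0) : IsMaxOn (g * ·) (Icc 0 1) 0 :=
  isMaxOn_iff.mpr fun _ hy => by simpa using mul_nonpos_of_nonpos_of_nonneg hg hy.1

end LinearMaximization

section BestReply

variable {P : ℝ} {s : Profile}

theorem E1_update_le
    (ha : IsMaxOn ((-2 * s.b2 + 2 * s.c2 - 2 * s.b3 + 2 * s.d3 - s.b2 * s.c3) * ·)
      (Icc 0 1) s.a1)
    (hb : IsMaxOn ((2 * P - 4 - (P + 1) * (s.c2 + s.d3)) * ·) (Icc 0 1) s.b1)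
    (hc : IsMaxOn ((s.b2 - 2 + (P + s.a2) * s.b3) * ·) (Icc 0 1) s.c1)
    (hd : IsMaxOn (((P + 1) * s.b2 - 2 * s.a2) * ·) (Icc 0 1) s.d1)
    {a b c d : ℝ} (haI : a ∈ Icc (0:ℝ) 1) (hbI : b ∈ Icc (0:ℝ) 1)
    (hcI : c ∈ Icc (0:ℝ) 1) (hdI : d ∈ Icc (0:ℝ) 1) :
    E1 P { s with a1 := a, b1 := b, c1 := c, d1 := d } ≤ E1 P s := by
  have := isMaxOn_iff.mp ha a haI
  have := isMaxOn_iff.mp hb b hbI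
  have := isMaxOn_iff.mp hc c hcI
  have := isMaxOn_iff.mp hd d hdI
  simp only [E1]
  linarith

theorem E2_update_le
    (ha : IsMaxOn ((2 * s.d1 + 2 * s.c3 - 2 * s.b3 - s.c1 * s.b3 - s.b1 * s.c3) * ·)
      (Icc 0 1) s.a2)
    (hb : IsMaxOn ((2 * P - 4 + 2 * s.a1 - (P + 1) * (s.c3 + s.d1)) * ·) (Icc 0 1) s.b2)
    (hc : IsMaxOn ((P * s.b1 - 2 * s.a1) * ·) (Icc 0 1) s.c2)
    (hd : IsMaxOn (((P + 1) * s.b3 - 2 + s.b1) * ·) (Icc 0 1) s.d2)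
    {a b c d : ℝ} (haI : a ∈ Icc (0:ℝ) 1) (hbI : b ∈ Icc (0:ℝ) 1)
    (hcI : c ∈ Icc (0:ℝ) 1) (hdI : d ∈ Icc (0:ℝ) 1) :
    E2 P { s with a2 := a, b2 := b, c2 := c, d2 := d } ≤ E2 P s := by
  have := isMaxOn_iff.mp ha a haI
  have := isMaxOn_iff.mp hb b hbI
  have := isMaxOn_iff.mp hc c hcI
  have := isMaxOn_iff.mp hd d hdI
  simp only [E2]
  linarith

theorem E3_update_le
    (hb : IsMaxOn ((2 * P - 4 + 2 * s.a1 + 2 * s.a2 - (P + 1) * (s.c1 + s.d2)) * ·)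
      (Icc 0 1) s.b3)
    (hc : IsMaxOn (((P + s.a1) * s.b2 - (2 - s.b1) * s.a2) * ·) (Icc 0 1) s.c3)
    (hd : IsMaxOn (((P + 1) * s.b1 - 2 * s.a1) * ·) (Icc 0 1) s.d3)
    {b c d : ℝ} (hbI : b ∈ Icc (0:ℝ) 1) (hcI : c ∈ Icc (0:ℝ) 1) (hdI : d ∈ Icc (0:ℝ) 1) :
    E3 P { s with b3 := b, c3 := c, d3 := d } ≤ E3 P s := by
  have := isMaxOn_iff.mp hb b hbI
  have := isMaxOn_iff.mp hc c hcI
  have := isMaxOn_iff.mp hd d hdI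
  simp only [E3]
  linarith

end BestReply

theorem two_mul_sq_sub_six_mul_sub_seven_nonneg {P : ℝ} (h : (3 + √23) / 2 ≤ P) :
    0 ≤ 2 * P ^ 2 - 6 * P - 7 := by
  have h23 : √23 ^ 2 = 23 := Real.sq_sqrt (by norm_num)
  nlinarith [Real.sqrt_nonneg 23]

noncomputable def solution6 (P : ℝ) : Profile :=
  ⟨(4 - P) * (P + 1), 2 * (4 - P), 1, (4 + 8 * P - 2 * P ^ 2) / (P + 1),
    1, 2 / (P + 1), 0, (5 + 7 * P - 2 * P ^ 2) / (P + 1),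
    2 * (P - 3) / (P + 1), 0, (2 * P - 4) / (P + 1)⟩

theorem isEquilibrium_solution6 {P : ℝ} (hPl : (3 + √23) / 2 ≤ P) (hPu : P ≤ 4) :
    IsEquilibrium P (solution6 P) := by
  have hq := two_mul_sq_sub_six_mul_sub_seven_nonneg hPl
  have hP : 0 < P + 1 := by linarith [Real.sqrt_nonneg 23]
  refine ⟨fun _ _ _ _ => E1_update_le ?_ ?_ ?_ ?_, fun _ _ _ _ => E2_update_le ?_ ?_ ?_ ?_,
    fun _ _ _ => E3_update_le ?_ ?_ ?_⟩ <;> simp only [solution6]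
  · exact isMaxOn_mul_of_eq_zero (by field_simp; ring)
  · exact isMaxOn_mul_of_eq_zero (by field_simp; ring)
  · exact isMaxOn_mul_Icc_one (by field_simp; nlinarith)
  · exact isMaxOn_mul_of_eq_zero (by field_simp; ring)
  · exact isMaxOn_mul_Icc_one (by field_simp; nlinarith)
  · exact isMaxOn_mul_of_eq_zero (by field_simp; ring)
  · exact isMaxOn_mul_Icc_zero (by nlinarith)
  · exact isMaxOn_mul_of_eq_zero (by field_simp; ring)
  · exact isMaxOn_mul_of_eq_zero (by field_simp; ring)
  · exact isMaxOn_mul_Icc_zero (by field_simp; nlinarith)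
  · exact isMaxOn_mul_of_eq_zero (by field_simp; ring)

theorem solution_6_is_equilibrium_general (P : ℝ) (s : Profile)
    (hPl : (3 + Real.sqrt 23) / 2 ≤ P) (hPu : P ≤ 4)
    (ha1 : s.a1 = (4 - P) * (P + 1)) (hb1 : s.b1 = 2 * (4 - P))
    (ha2 : s.a2 = 1) (hb2 : s.b2 = 2 / (P + 1)) (hb3 : s.b3 = 2 * (P - 3) / (P + 1))
    (hc1 : s.c1 = 1) (hd2 : s.d2 = (5 + 7 * P - 2 * P ^ 2) / (P + 1)) (hc3 : s.c3 = 0)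
    (hd1 : s.d1 = (4 + 8 * P - 2 * P ^ 2) / (P + 1))
    (hc2 : s.c2 = 0) (hd3 : s.d3 = (2 * P - 4) / (P + 1)) :
    IsEquilibrium P s := by
  have hs : s = solution6 P := by
    obtain ⟨⟩ := s
    simp_all [solution6]
  exact hs ▸ isEquilibrium_solution6 hPl hPu

theorem solution_6_is_equilibrium (P : ℝ) (s : Profile)
    (hPl : (3 + Real.sqrt 23) / 2 ≤ P) (hPu : P ≤ 4) (hval : s.valid)
    (ha1 : s.a1 = (4 - P) * (P + 1)) (hb1 : s.b1 = 2 * (4 - P))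
    (ha2 : s.a2 = 1) (hb2 : s.b2 = 2 / (P + 1)) (hb3 : s.b3 = 2 * (P - 3) / (P + 1))
    (hc1 : s.c1 = 1) (hd2 : s.d2 = (5 + 7 * P - 2 * P ^ 2) / (P + 1)) (hc3 : s.c3 = 0)
    (hd1 : s.d1 = (4 + 8 * P - 2 * P ^ 2) / (P + 1))
    (hc2 : s.c2 = 0) (hd3 : s.d3 = (2 * P - 4) / (P + 1)) :
    IsEquilibrium P s :=
  solution_6_is_equilibrium_general P s hPl hPu ha1 hb1 ha2 hb2 hb3 hc1 hd2 hc3 hd1 hc2 hd3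
end

section
/- (Solution 9) In the simplified three-player full-street Kuhn poker game with pot size (7+√105)/4 ≤ P ≤ 5, every strategy profile with a₁ = 1, b₁ = 2/(P+1), a₂ = 1, b₂ = 2/(P+1), b₃ = 2P/(P+1)², c₁ + d₂ = 2P/(P+1), c₃ = 1, d₁ = (P−3)/(P+1), c₂ = 0 and d₃ = (2P−4)/(P+1) is an equilibrium. -/
/-! Each expected profit is affine in its owner's frequencies, with slopes depending only on the
opponents, so a frequency is a best response when its slope vanishes or pushes it towards the end of
`[0,1]` where it already sits. Against Solution 9 the only nonzero slopes are those of `a₁, a₂, c₂, c₃`,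
namely `2(2P² − 7P − 7)/(P+1)²`, `2(2P² − 3P − 3 − c₁P)/(P+1)²`, `−2/(P+1)` and `2/(P+1)`. The first is
nonnegative because `(7 + √105)/4` is the larger root of `2P² − 7P − 7`, and the second dominates it
since `c₁ ≤ 1`. -/

lemma mul_sub_nonpos_of_eq_one {k x y : ℝ} (hk : 0 ≤ k) (hx : x = 1) (hy : y ≤ 1) :
    k * (y - x) ≤ 0 :=
  mul_nonpos_of_nonneg_of_nonpos hk (by linarith)

lemma mul_sub_nonpos_of_eq_zero {k x y : ℝ} (hk : k ≤ 0) (hx : x = 0) (hy : 0 ≤ y) :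
    k * (y - x) ≤ 0 :=
  mul_nonpos_of_nonpos_of_nonneg hk (by linarith)

lemma two_mul_sq_sub_nonneg_of_le {P : ℝ} (hP : (7 + Real.sqrt 105) / 4 ≤ P) :
    0 ≤ 2 * P ^ 2 - 7 * P - 7 := by
  have hsq : Real.sqrt 105 ^ 2 = 105 := Real.sq_sqrt (by norm_num)
  nlinarith [Real.sqrt_nonneg 105]

lemma nine_le_sqrt_105 : (9 : ℝ) ≤ Real.sqrt 105 :=
  Real.le_sqrt_of_sq_le (by norm_num)

section Deviations

variable (P : ℝ) (s : Profile)

lemma E1_update_sub (a b c d : ℝ) :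
    E1 P { s with a1 := a, b1 := b, c1 := c, d1 := d } - E1 P s =
      ((-2 * s.b2 + 2 * s.c2 - 2 * s.b3 + 2 * s.d3 - s.b2 * s.c3) * (a - s.a1)
        + (2 * P - 4 - (P + 1) * (s.c2 + s.d3)) * (b - s.b1)
        + (s.b2 - 2 + (P + s.a2) * s.b3) * (c - s.c1)
        + ((P + 1) * s.b2 - 2 * s.a2) * (d - s.d1)) / 24 := by
  simp only [E1]
  ring

lemma E2_update_sub (a b c d : ℝ) :
    E2 P { s with a2 := a, b2 := b, c2 := c, d2 := d } - E2 P s =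
      ((2 * s.d1 + 2 * s.c3 - 2 * s.b3 - s.c1 * s.b3 - s.b1 * s.c3) * (a - s.a2)
        + (2 * P - 4 + 2 * s.a1 - (P + 1) * (s.c3 + s.d1)) * (b - s.b2)
        + (P * s.b1 - 2 * s.a1) * (c - s.c2)
        + ((P + 1) * s.b3 - 2 + s.b1) * (d - s.d2)) / 24 := by
  simp only [E2]
  ring

lemma E3_update_sub (b c d : ℝ) :
    E3 P { s with b3 := b, c3 := c, d3 := d } - E3 P s =
      ((2 * P - 4 + 2 * s.a1 + 2 * s.a2 - (P + 1) * (s.c1 + s.d2)) * (b - s.b3)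
        + ((P + s.a1) * s.b2 - (2 - s.b1) * s.a2) * (c - s.c3)
        + ((P + 1) * s.b1 - 2 * s.a1) * (d - s.d3)) / 24 := by
  simp only [E3]
  ring

end Deviations

section Solution9

variable {P : ℝ} {s : Profile}

lemma E1_update_le_of_solution9 (hP : 0 ≤ P) (hquad : 0 ≤ 2 * P ^ 2 - 7 * P - 7)
    (ha1 : s.a1 = 1) (ha2 : s.a2 = 1) (hb2 : s.b2 = 2 / (P + 1))
    (hb3 : s.b3 = 2 * P / (P + 1) ^ 2) (hc2 : s.c2 = 0) (hc3 : s.c3 = 1)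
    (hd3 : s.d3 = (2 * P - 4) / (P + 1)) {a b c d : ℝ} (ha : a ≤ 1) :
    E1 P { s with a1 := a, b1 := b, c1 := c, d1 := d } ≤ E1 P s := by
  have hP1 : P + 1 ≠ 0 := by positivity
  have slope_a : -2 * s.b2 + 2 * s.c2 - 2 * s.b3 + 2 * s.d3 - s.b2 * s.c3
      = 2 * (2 * P ^ 2 - 7 * P - 7) / (P + 1) ^ 2 := by
    rw [hb2, hc2, hb3, hd3, hc3]; field_simp; ring
  have slope_b : 2 * P - 4 - (P + 1) * (s.c2 + s.d3) = 0 := by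
    rw [hc2, hd3]; field_simp; ring
  have slope_c : s.b2 - 2 + (P + s.a2) * s.b3 = 0 := by
    rw [hb2, ha2, hb3]; field_simp; ring
  have slope_d : (P + 1) * s.b2 - 2 * s.a2 = 0 := by
    rw [hb2, ha2]; field_simp; ring
  rw [← sub_nonpos, E1_update_sub, slope_a, slope_b, slope_c, slope_d]
  have gain_a := mul_sub_nonpos_of_eq_one (k := 2 * (2 * P ^ 2 - 7 * P - 7) / (P + 1) ^ 2)
    (by positivity) ha1 ha
  linarith

lemma E2_update_le_of_solution9 (hP : 0 ≤ P) (hquad : 0 ≤ 2 * P ^ 2 - 7 * P - 7)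
    (hc1 : s.c1 ≤ 1) (ha1 : s.a1 = 1) (hb1 : s.b1 = 2 / (P + 1)) (ha2 : s.a2 = 1)
    (hb3 : s.b3 = 2 * P / (P + 1) ^ 2) (hc2 : s.c2 = 0) (hc3 : s.c3 = 1)
    (hd1 : s.d1 = (P - 3) / (P + 1)) {a b c d : ℝ} (ha : a ≤ 1) (hc : 0 ≤ c) :
    E2 P { s with a2 := a, b2 := b, c2 := c, d2 := d } ≤ E2 P s := by
  have hP1 : P + 1 ≠ 0 := by positivity
  have slope_a : 2 * s.d1 + 2 * s.c3 - 2 * s.b3 - s.c1 * s.b3 - s.b1 * s.c3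
      = 2 * (2 * P ^ 2 - 3 * P - 3 - s.c1 * P) / (P + 1) ^ 2 := by
    rw [hd1, hc3, hb3, hb1]; field_simp; ring
  have slope_b : 2 * P - 4 + 2 * s.a1 - (P + 1) * (s.c3 + s.d1) = 0 := by
    rw [ha1, hc3, hd1]; field_simp; ring
  have slope_c : P * s.b1 - 2 * s.a1 = -2 / (P + 1) := by
    rw [hb1, ha1]; field_simp; ring
  have slope_d : (P + 1) * s.b3 - 2 + s.b1 = 0 := by
    rw [hb3, hb1]; field_simp; ring
  rw [← sub_nonpos, E2_update_sub, slope_a, slope_b, slope_c, slope_d]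
  have hnum : 0 ≤ 2 * P ^ 2 - 3 * P - 3 - s.c1 * P := by nlinarith
  have gain_a := mul_sub_nonpos_of_eq_one
    (k := 2 * (2 * P ^ 2 - 3 * P - 3 - s.c1 * P) / (P + 1) ^ 2) (by positivity) ha2 ha
  have gain_c := mul_sub_nonpos_of_eq_zero (k := -2 / (P + 1))
    (div_nonpos_of_nonpos_of_nonneg (by norm_num) (by linarith)) hc2 hc
  linarith

lemma E3_update_le_of_solution9 (hP : 0 ≤ P) (ha1 : s.a1 = 1) (hb1 : s.b1 = 2 / (P + 1))
    (ha2 : s.a2 = 1) (hb2 : s.b2 = 2 / (P + 1)) (hc1d2 : s.c1 + s.d2 = 2 * P / (P + 1))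
    (hc3 : s.c3 = 1) {b c d : ℝ} (hc : c ≤ 1) :
    E3 P { s with b3 := b, c3 := c, d3 := d } ≤ E3 P s := by
  have hP1 : P + 1 ≠ 0 := by positivity
  have slope_b : 2 * P - 4 + 2 * s.a1 + 2 * s.a2 - (P + 1) * (s.c1 + s.d2) = 0 := by
    rw [ha1, ha2, hc1d2]; field_simp; ring
  have slope_c : (P + s.a1) * s.b2 - (2 - s.b1) * s.a2 = 2 / (P + 1) := by
    rw [ha1, hb2, hb1, ha2]; field_simp; ring
  have slope_d : (P + 1) * s.b1 - 2 * s.a1 = 0 := by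
    rw [hb1, ha1]; field_simp; ring
  rw [← sub_nonpos, E3_update_sub, slope_b, slope_c, slope_d]
  have gain_c := mul_sub_nonpos_of_eq_one (k := 2 / (P + 1))
    (div_nonneg zero_le_two (by linarith)) hc3 hc
  linarith

end Solution9

theorem solution_9_is_equilibrium_general (P : ℝ) (s : Profile)
    (hPl : (7 + Real.sqrt 105) / 4 ≤ P) (hval : s.valid)
    (ha1 : s.a1 = 1) (hb1 : s.b1 = 2 / (P + 1))
    (ha2 : s.a2 = 1) (hb2 : s.b2 = 2 / (P + 1))
    (hb3 : s.b3 = 2 * P / (P + 1) ^ 2)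
    (hc1d2 : s.c1 + s.d2 = 2 * P / (P + 1)) (hc3 : s.c3 = 1)
    (hd1 : s.d1 = (P - 3) / (P + 1))
    (hc2 : s.c2 = 0) (hd3 : s.d3 = (2 * P - 4) / (P + 1)) :
    IsEquilibrium P s := by
  have hP : 0 ≤ P := by linarith [nine_le_sqrt_105]
  have hquad := two_mul_sq_sub_nonneg_of_le hPl
  have hc1 : s.c1 ≤ 1 := hval.2.2.1.2
  exact ⟨fun _ _ _ _ ha _ _ _ =>
      E1_update_le_of_solution9 hP hquad ha1 ha2 hb2 hb3 hc2 hc3 hd3 ha.2,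
    fun _ _ _ _ ha _ hc _ =>
      E2_update_le_of_solution9 hP hquad hc1 ha1 hb1 ha2 hb3 hc2 hc3 hd1 ha.2 hc.1,
    fun _ _ _ _ hc _ => E3_update_le_of_solution9 hP ha1 hb1 ha2 hb2 hc1d2 hc3 hc.2⟩

theorem solution_9_is_equilibrium (P : ℝ) (s : Profile)
    (hPl : (7 + Real.sqrt 105) / 4 ≤ P) (hPu : P ≤ 5) (hval : s.valid)
    (ha1 : s.a1 = 1) (hb1 : s.b1 = 2 / (P + 1))
    (ha2 : s.a2 = 1) (hb2 : s.b2 = 2 / (P + 1))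
    (hb3 : s.b3 = 2 * P / (P + 1) ^ 2)
    (hc1d2 : s.c1 + s.d2 = 2 * P / (P + 1)) (hc3 : s.c3 = 1)
    (hd1 : s.d1 = (P - 3) / (P + 1))
    (hc2 : s.c2 = 0) (hd3 : s.d3 = (2 * P - 4) / (P + 1)) :
    IsEquilibrium P s :=
  solution_9_is_equilibrium_general P s hPl hval ha1 hb1 ha2 hb2 hb3 hc1d2 hc3 hd1 hc2 hd3
end
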